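/- Let V be the 6-dimensional space of quadratic forms in 3 variables over a field K with char K ∉ {2}, acted on by SL₃(ℤ). If U ⊆ V is a nonzero subspace invariant under all diagonal sign matrices diag(±1,±1,±1) of determinant 1 and under the squares of all elementary matrices Eᵢⱼ(1), then U = V. -/

import Mathlib

/-!
For `k : Fin 3` the determinant-one sign matrix `diagonal (negExcept k)` acts on quadratic forms
as the sign change `σₖ : xₖ ↦ -xₖ`. Hence for `a ≠ b` and `p ∈ U` the form
`(1 - σₐ)(1 - σᵦ) p = 4 cₐᵦ(p) xₐxᵦ` lies in `U`: every mixed monomial occurring in an element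
of `U` lies in `U`. The square of `Eᵢⱼ(1)` is the transvection `xᵢ ↦ xᵢ + 2xⱼ`. If a nonzero
`p ∈ U` has no mixed terms, it is `∑ cᵢ xᵢ²` with some `cₐ ≠ 0`, and `xₐ ↦ xₐ + 2xᵦ` produces
the mixed term `4cₐ xₐxᵦ`; so `U` contains some `xₐxᵦ` with `a ≠ b`. Finally `xᵦ ↦ xᵦ + 2x_c`
sends `xₐxᵦ` to `xₐxᵦ + 2xₐx_c`, which moves a factor of a monomial in `U` to any variable,
and these moves reach every `xᵢxⱼ`.
-/

open Matrix MvPolynomial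


/-- Substitution action of a matrix `M` on polynomials: `xᵢ ↦ ∑ⱼ Mᵢⱼ xⱼ`. -/
noncomputable def subst {K : Type*} [CommRing K] (M : Matrix (Fin 3) (Fin 3) ℤ) :
    MvPolynomial (Fin 3) K →ₐ[K] MvPolynomial (Fin 3) K :=
  MvPolynomial.aeval fun i => ∑ j, (M i j : K) • MvPolynomial.X j

/-- The reduction map `SL₃(ℤ) → SL₃(ℤ/2)`. -/
def red2 : Matrix.SpecialLinearGroup (Fin 3) ℤ →* Matrix.SpecialLinearGroup (Fin 3) (ZMod 2) :=
  Matrix.SpecialLinearGroup.map (Int.castRingHom (ZMod 2))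

/-- The level-2 principal congruence subgroup `A ≤ SL₃(ℤ)`. -/
def congr2 : Subgroup (Matrix.SpecialLinearGroup (Fin 3) ℤ) := red2.ker

namespace Finsupp
variable {σ : Type*}

lemma exists_eq_single_add_single_of_degree_eq_two {d : σ →₀ ℕ} (hd : d.degree = 2) :
    ∃ i j, d = single i 1 + single j 1 := by
  obtain ⟨g, hgd, hg⟩ := exists_le_degree_eq d 1 (by omega)
  have hrest : (d - g).degree = 1 := by
    have := map_add degree g (d - g)
    rw [add_tsub_cancel_of_le hgd] at this
    omega
  obtain ⟨i, hi⟩ : g ∈ Set.range (single · 1) := range_single_one (σ := σ) ▸ hg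
  obtain ⟨j, hj⟩ : d - g ∈ Set.range (single · 1) := range_single_one (σ := σ) ▸ hrest
  exact ⟨i, j, by rw [show single i 1 = g from hi, show single j 1 = d - g from hj,
    add_tsub_cancel_of_le hgd]⟩

lemma eq_single_add_single_of_degree_eq_two {d : σ →₀ ℕ} (hd : d.degree = 2) {a b : σ}
    (hab : a ≠ b) (ha : d a ≠ 0) (hb : d b ≠ 0) : d = single a 1 + single b 1 := by
  classical
  have hle : single a 1 + single b 1 ≤ d := by
    intro i
    simp only [coe_add, Pi.add_apply, single_apply]
    split_ifs <;> subst_vars <;> first | omega | exact absurd rfl hab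
  have hrest : (d - (single a 1 + single b 1)).degree = 0 := by
    have := map_add degree (single a 1 + single b 1) (d - (single a 1 + single b 1))
    rw [add_tsub_cancel_of_le hle, map_add, degree_single, degree_single] at this
    omega
  rw [degree_eq_zero_iff, tsub_eq_zero_iff_le] at hrest
  exact le_antisymm hrest hle

lemma range_single_add_single :
    Set.range (fun ij : σ × σ ↦ single ij.1 1 + single ij.2 1) = {d | d.degree = 2} := by
  refine subset_antisymm ?_ fun d hd ↦ ?_
  · rintro _ ⟨ij, rfl⟩
    simp
  · obtain ⟨i, j, rfl⟩ := exists_eq_single_add_single_of_degree_eq_two hd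
    exact ⟨(i, j), rfl⟩

end Finsupp

namespace MvPolynomial
variable {σ R : Type*} [CommSemiring R]

lemma X_mul_X (i j : σ) :
    (X i * X j : MvPolynomial σ R) = monomial (Finsupp.single i 1 + Finsupp.single j 1) 1 := by
  rw [X, X, monomial_mul, one_mul]

lemma homogeneousSubmodule_two_eq_span :
    homogeneousSubmodule σ R 2 = .span R (.range fun ij : σ × σ ↦ X ij.1 * X ij.2) := by
  simp [homogeneousSubmodule_eq_finsupp_supported, AddMonoidAlgebra.supported_eq_span_single,
    single_eq_monomial, ← Finsupp.range_single_add_single, ← Set.range_comp, Function.comp_def,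
    X_mul_X]

lemma IsHomogeneous.eq_sum_C_mul_X_sq [Fintype σ] {p : MvPolynomial σ R} (hp : p.IsHomogeneous 2)
    (hmixed : ∀ i j, i ≠ j → coeff (Finsupp.single i 1 + Finsupp.single j 1) p = 0) :
    p = ∑ i, C (coeff (Finsupp.single i 1 + Finsupp.single i 1) p) * X i ^ 2 := by
  classical
  ext d
  simp only [coeff_sum, coeff_C_mul, sq, X_mul_X, coeff_monomial, mul_ite, mul_one, mul_zero]
  by_cases hd : d.degree = 2
  · obtain ⟨i, j, rfl⟩ := Finsupp.exists_eq_single_add_single_of_degree_eq_two hd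
    by_cases hij : i = j
    · subst hij
      rw [Finset.sum_eq_single i, if_pos rfl]
      · intro k _ hk
        simp [Finsupp.single_add_single_eq_single_add_single, hk]
      · simp
    · rw [hmixed i j hij, Finset.sum_eq_zero fun k _ ↦ if_neg ?_]
      simp only [Finsupp.single_add_single_eq_single_add_single one_ne_zero one_ne_zero]
      grind
  · rw [hp.coeff_eq_zero hd, Finset.sum_eq_zero fun k _ ↦ if_neg ?_]
    rintro rfl
    simp at hd

end MvPolynomial

section Substitution
variable {K : Type*} [CommRing K]

lemma subst_C (M : Matrix (Fin 3) (Fin 3) ℤ) (c : K) : subst M (C c) = C c :=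
  (subst M).commutes c

lemma subst_diagonal_X (s : Fin 3 → ℤ) (i : Fin 3) :
    subst (K := K) (diagonal s) (X i) = C (s i : K) * X i := by
  simp [subst, diagonal_apply, smul_eq_C_mul]

lemma subst_diagonal_monomial (s : Fin 3 → ℤ) (d : Fin 3 →₀ ℕ) (r : K) :
    subst (diagonal s) (monomial d r) = monomial d ((∏ i, (s i : K) ^ d i) * r) := by
  rw [monomial_eq, monomial_eq, map_mul, ← algebraMap_eq, AlgHom.commutes, map_finsuppProd,
    Finsupp.prod_fintype _ _ (by simp), Finsupp.prod_fintype _ _ (by simp)]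
  simp only [map_pow, subst_diagonal_X, mul_pow, Finset.prod_mul_distrib, map_mul, map_prod]
  simp only [algebraMap_eq, map_intCast]
  ring

lemma coeff_subst_diagonal (s : Fin 3 → ℤ) (p : MvPolynomial (Fin 3) K) (d : Fin 3 →₀ ℕ) :
    coeff d (subst (diagonal s) p) = (∏ i, (s i : K) ^ d i) * coeff d p := by
  classical
  induction p using MvPolynomial.induction_on' with
  | monomial e r =>
    rw [subst_diagonal_monomial, coeff_monomial, coeff_monomial]
    split_ifs with h
    · rw [h]
    · rw [mul_zero]
  | add p q hp hq => rw [map_add, coeff_add, coeff_add, hp, hq, mul_add]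

def negExcept (k : Fin 3) : Fin 3 → ℤ := fun i ↦ if i = k then 1 else -1

lemma negExcept_eq_one_or_neg_one (k i : Fin 3) : negExcept k i = 1 ∨ negExcept k i = -1 := by
  unfold negExcept; split_ifs <;> simp

lemma prod_negExcept (k : Fin 3) : ∏ i, negExcept k i = 1 := by
  fin_cases k <;> decide

lemma prod_negExcept_pow (k : Fin 3) {d : Fin 3 →₀ ℕ} (hd : d.degree = 2) :
    ∏ i, (negExcept k i : K) ^ d i = (-1) ^ d k := by
  have hsum : ∑ i ∈ Finset.univ.erase k, d i + d k = 2 := by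
    rw [Finset.sum_erase_add _ _ (Finset.mem_univ k), ← Finsupp.degree_eq_sum, hd]
  have hk : d k ≤ 2 := hd ▸ Finsupp.le_degree k d
  rw [← Finset.prod_erase_mul _ _ (Finset.mem_univ k)]
  simp only [negExcept, if_pos, Int.cast_one, one_pow, mul_one]
  rw [Finset.prod_congr rfl (g := fun i ↦ (-1 : K) ^ d i) (by
      intro i hi; rw [if_neg (Finset.ne_of_mem_erase hi)]; simp),
    Finset.prod_pow_eq_pow_sum]
  interval_cases h : d k <;> simp [show ∑ i ∈ Finset.univ.erase k, d i = 2 - d k by omega, h]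

lemma coeff_sub_subst_negExcept (k : Fin 3) (p : MvPolynomial (Fin 3) K) {d : Fin 3 →₀ ℕ}
    (hd : d.degree = 2) :
    coeff d (p - subst (diagonal (negExcept k)) p) = (1 - (-1) ^ d k) * coeff d p := by
  rw [coeff_sub, coeff_subst_diagonal, prod_negExcept_pow k hd, sub_mul, one_mul]

lemma subst_transvection_X_self (i j : Fin 3) (c : ℤ) :
    subst (K := K) (transvection i j c) (X i) = X i + C (c : K) * X j := by
  simp [subst, transvection, one_apply, single_apply, add_smul, Finset.sum_add_distrib,
    smul_eq_C_mul]

lemma subst_transvection_X_of_ne {i k : Fin 3} (hki : k ≠ i) (j : Fin 3) (c : ℤ) :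
    subst (K := K) (transvection i j c) (X k) = X k := by
  simp [subst, transvection, one_apply, single_apply, add_smul, Finset.sum_add_distrib,
    smul_eq_C_mul, hki.symm]

lemma sq_one_add_single_one {i j : Fin 3} (hij : i ≠ j) :
    (1 + single i j (1 : ℤ)) ^ 2 = transvection i j 2 := by
  rw [sq, ← transvection, transvection_mul_transvection_same _ _ hij]
  rfl

lemma coeff_subst_transvection_X_sq {a b : Fin 3} (hab : a ≠ b) (i : Fin 3) :
    coeff (Finsupp.single a 1 + Finsupp.single b 1)
      (subst (K := K) (transvection a b 2) (X i ^ 2)) = if i = a then 4 else 0 := by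
  classical
  by_cases hi : i = a
  · subst hi
    rw [map_pow, subst_transvection_X_self, if_pos rfl,
      show (X i + C ((2 : ℤ) : K) * X b) ^ 2 = X i * X i + C 4 * (X i * X b) + C 4 * (X b * X b) by
        rw [Int.cast_ofNat, map_ofNat C, map_ofNat C]; ring]
    simp [coeff_C_mul, X_mul_X, coeff_monomial, Finsupp.single_left_inj, hab, hab.symm]
  · rw [map_pow, subst_transvection_X_of_ne hi, sq, X_mul_X, coeff_monomial, if_neg hi]
    simp [Finsupp.single_add_single_eq_single_add_single, hab, hi]

end Substitution

section InvariantSubspace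
variable {K : Type*} [Field K] {U : Submodule K (MvPolynomial (Fin 3) K)}

lemma X_mul_X_mem_of_coeff_ne_zero (h2 : (2 : K) ≠ 0)
    (hUV : U ≤ homogeneousSubmodule (Fin 3) K 2)
    (hsign : ∀ k, ∀ p ∈ U, subst (diagonal (negExcept k)) p ∈ U)
    {p : MvPolynomial (Fin 3) K} (hp : p ∈ U) {a b : Fin 3} (hab : a ≠ b)
    (hc : coeff (Finsupp.single a 1 + Finsupp.single b 1) p ≠ 0) : X a * X b ∈ U := by
  classical
  set e := Finsupp.single a 1 + Finsupp.single b 1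
  set r := p - subst (diagonal (negExcept b)) p
  set q := r - subst (diagonal (negExcept a)) r
  have hr : r ∈ U := U.sub_mem hp (hsign b p hp)
  have hq : q ∈ U := U.sub_mem hr (hsign a r hr)
  have hq_eq : q = (4 * coeff e p) • (X a * X b) := by
    ext d
    rw [coeff_smul, X_mul_X, coeff_monomial, smul_eq_mul, mul_ite, mul_one, mul_zero]
    by_cases hd : d.degree = 2
    · rw [coeff_sub_subst_negExcept a r hd, coeff_sub_subst_negExcept b p hd]
      by_cases hab' : d a ≠ 0 ∧ d b ≠ 0
      · obtain rfl := Finsupp.eq_single_add_single_of_degree_eq_two hd hab hab'.1 hab'.2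
        rw [if_pos rfl]
        norm_num [e, hab, hab.symm, ← mul_assoc]
      · rw [if_neg]
        · rcases not_and_or.mp hab' with h | h <;> simp [not_not.mp h]
        · rintro rfl
          simp [hab] at hab'
    · rw [(hUV hq).coeff_eq_zero hd, if_neg]
      rintro rfl
      simp at hd
  have h4 : 4 * coeff e p ≠ 0 := mul_ne_zero (by simpa [show (4 : K) = 2 * 2 by norm_num]) hc
  exact (U.smul_mem_iff h4).mp (hq_eq ▸ hq)

lemma X_mul_X_mem_of_X_mul_X_mem (h2 : (2 : K) ≠ 0)
    (helem : ∀ i j, i ≠ j → ∀ p ∈ U, subst (transvection i j 2) p ∈ U)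
    {a b : Fin 3} (hab : a ≠ b) (h : X a * X b ∈ U) (c : Fin 3) : X a * X c ∈ U := by
  by_cases hbc : b = c
  · rwa [← hbc]
  have hsub : subst (K := K) (transvection b c 2) (X a * X b) - X a * X b =
      (2 : K) • (X a * X c) := by
    rw [map_mul, subst_transvection_X_of_ne hab, subst_transvection_X_self, smul_eq_C_mul,
      Int.cast_ofNat]
    ring
  exact (U.smul_mem_iff h2).mp (hsub ▸ U.sub_mem (helem b c hbc _ h) h)

lemma forall_X_mul_X_mem (h2 : (2 : K) ≠ 0)
    (helem : ∀ i j, i ≠ j → ∀ p ∈ U, subst (transvection i j 2) p ∈ U)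
    {a b : Fin 3} (hab : a ≠ b) (h : X a * X b ∈ U) (i j : Fin 3) : X i * X j ∈ U := by
  by_cases hi : i = a
  · exact hi ▸ X_mul_X_mem_of_X_mul_X_mem h2 helem hab h j
  · have hia : X i * X a ∈ U := by
      rw [mul_comm]
      exact X_mul_X_mem_of_X_mul_X_mem h2 helem hab h i
    exact X_mul_X_mem_of_X_mul_X_mem h2 helem hi hia j

lemma exists_X_mul_X_mem (h2 : (2 : K) ≠ 0) (hUV : U ≤ homogeneousSubmodule (Fin 3) K 2)
    (hne : U ≠ ⊥) (hsign : ∀ k, ∀ p ∈ U, subst (diagonal (negExcept k)) p ∈ U)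
    (helem : ∀ i j, i ≠ j → ∀ p ∈ U, subst (transvection i j 2) p ∈ U) :
    ∃ a b, a ≠ b ∧ X a * X b ∈ U := by
  obtain ⟨p, hp, hp0⟩ := Submodule.exists_mem_ne_zero_of_ne_bot hne
  by_cases hmixed : ∃ a b, a ≠ b ∧ coeff (Finsupp.single a 1 + Finsupp.single b 1) p ≠ 0
  · obtain ⟨a, b, hab, hc⟩ := hmixed
    exact ⟨a, b, hab, X_mul_X_mem_of_coeff_ne_zero h2 hUV hsign hp hab hc⟩
  push Not at hmixed
  have hdiag := (hUV hp).eq_sum_C_mul_X_sq hmixed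
  obtain ⟨a, ha⟩ : ∃ a, coeff (Finsupp.single a 1 + Finsupp.single a 1) p ≠ 0 := by
    by_contra! h
    exact hp0 (by rw [hdiag]; simp [h])
  obtain ⟨b, hba⟩ := exists_ne a
  refine ⟨a, b, hba.symm, X_mul_X_mem_of_coeff_ne_zero h2 hUV hsign (helem a b hba.symm p hp)
    hba.symm ?_⟩
  rw [hdiag, map_sum, coeff_sum]
  simp only [map_mul, subst_C, coeff_C_mul, coeff_subst_transvection_X_sq hba.symm, mul_ite,
    mul_zero, Finset.sum_ite_eq', Finset.mem_univ, if_true]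
  exact mul_ne_zero ha (by simpa [show (4 : K) = 2 * 2 by norm_num])

end InvariantSubspace

/-- A nonzero subspace of the 6-dimensional space of quadratic forms in
3 variables (char `K ≠ 2`) invariant under all determinant-1 sign matrices and under the
squares of all elementary matrices `Eᵢⱼ(1)` is everything. -/
theorem stmt5 {K : Type*} [Field K] (hK : ringChar K ≠ 2)
    (U : Submodule K (MvPolynomial (Fin 3) K))
    (hUV : U ≤ MvPolynomial.homogeneousSubmodule (Fin 3) K 2)
    (hne : U ≠ ⊥)
    (hsign : ∀ s : Fin 3 → ℤ, (∀ i, s i = 1 ∨ s i = -1) → (∏ i, s i) = 1 →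
      ∀ p ∈ U, subst (Matrix.diagonal s) p ∈ U)
    (helem : ∀ i j : Fin 3, i ≠ j →
      ∀ p ∈ U, subst ((1 + Matrix.single i j (1 : ℤ)) ^ 2) p ∈ U) :
    U = MvPolynomial.homogeneousSubmodule (Fin 3) K 2 := by
  have h2 : (2 : K) ≠ 0 := Ring.two_ne_zero hK
  have hsign' : ∀ k, ∀ p ∈ U, subst (diagonal (negExcept k)) p ∈ U := fun k ↦
    hsign _ (negExcept_eq_one_or_neg_one k) (prod_negExcept k)
  have helem' : ∀ i j, i ≠ j → ∀ p ∈ U, subst (transvection i j 2) p ∈ U := fun i j hij ↦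
    sq_one_add_single_one hij ▸ helem i j hij
  obtain ⟨a, b, hab, hmem⟩ := exists_X_mul_X_mem h2 hUV hne hsign' helem'
  refine le_antisymm hUV ?_
  rw [homogeneousSubmodule_two_eq_span, Submodule.span_le]
  rintro _ ⟨⟨i, j⟩, rfl⟩
  exact forall_X_mul_X_mem h2 helem' hab hmem i j
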